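/- Let Σ(Q) be a positive system for Σ, and let 𝒫_σ(Q) denote the set of q-extreme positive systems Σ(P) with P ⪰ Q. Then the assignment Σ(P) ↦ 𝔞_q^+(P) is a bijection from 𝒫_σ(Q) onto the set of chambers (connected components of 𝔞_q^reg) contained in 𝔞_q^+(Q); in particular, for every q-extreme positive system Σ(P) with P ⪰ Q the set 𝔞_q^+(P) is a connected component of 𝔞_q^reg. -/

import Mathlib

/-- `P` is a positive system for the root set `S`: there is `X ∈ V` on which no root of `S`
vanishes, such that `P` is the set of roots of `S` that are positive on `X`. -/
def IsPosSystem {V : Type*} [AddCommGroup V] [Module ℝ V]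
    (S P : Set (V →ₗ[ℝ] ℝ)) : Prop :=
  ∃ X : V, (∀ α ∈ S, α X ≠ 0) ∧ P = {α | α ∈ S ∧ 0 < α X}

/-- `Σ(P, σ) = Σ(P) ∩ σ·Σ(P)`, where `σ` acts on functionals by `λ ↦ λ ∘ σ`. -/
def rootsSigma {V : Type*} [AddCommGroup V] [Module ℝ V]
    (σ : V →ₗ[ℝ] V) (P : Set (V →ₗ[ℝ] ℝ)) : Set (V →ₗ[ℝ] ℝ) :=
  P ∩ ((fun α => α.comp σ) '' P)

/-- `Σ(P, σθ) = Σ(P) ∩ σθ·Σ(P)`, where `σθ` acts on functionals by `λ ↦ -(λ ∘ σ)`. -/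
def rootsSigmaTheta {V : Type*} [AddCommGroup V] [Module ℝ V]
    (σ : V →ₗ[ℝ] V) (P : Set (V →ₗ[ℝ] ℝ)) : Set (V →ₗ[ℝ] ℝ) :=
  P ∩ ((fun α => -(α.comp σ)) '' P)

/-- `𝔞_h* = {λ : λ ∘ σ = λ}`, the functionals fixed by `σ`. -/
def ahStar {V : Type*} [AddCommGroup V] [Module ℝ V] (σ : V →ₗ[ℝ] V) :
    Set (V →ₗ[ℝ] ℝ) :=
  {l | l.comp σ = l}

/-- `𝔞_q`, the `-1` eigenspace of `σ` on `V`. -/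
def aqSet {V : Type*} [AddCommGroup V] [Module ℝ V] (σ : V →ₗ[ℝ] V) : Set V :=
  {X | σ X = -X}

/-- The partial ordering `P ⪰ Q`: `Σ(Q,σθ) ⊆ Σ(P,σθ)` and `Σ(P,σ) ⊆ Σ(Q,σ)`. -/
def Dominates {V : Type*} [AddCommGroup V] [Module ℝ V]
    (σ : V →ₗ[ℝ] V) (P Q : Set (V →ₗ[ℝ] ℝ)) : Prop :=
  rootsSigmaTheta σ Q ⊆ rootsSigmaTheta σ P ∧ rootsSigma σ P ⊆ rootsSigma σ Q

/-- `𝔞_q^reg`: the set of `H ∈ 𝔞_q` with `α(H) ≠ 0` for every `α ∈ Σ` not in `𝔞_h*`. -/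
def aqReg {V : Type*} [AddCommGroup V] [Module ℝ V]
    (σ : V →ₗ[ℝ] V) (S : Set (V →ₗ[ℝ] ℝ)) : Set V :=
  {H | H ∈ aqSet σ ∧ ∀ α ∈ S \ ahStar σ, α H ≠ 0}

/-- `𝔞_q^+(Q) = {H ∈ 𝔞_q : α(H) > 0 for all α ∈ Σ(Q,σθ)}`. -/
def aqPlus {V : Type*} [AddCommGroup V] [Module ℝ V]
    (σ : V →ₗ[ℝ] V) (Q : Set (V →ₗ[ℝ] ℝ)) : Set V :=
  {H | H ∈ aqSet σ ∧ ∀ α ∈ rootsSigmaTheta σ Q, 0 < α H}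

open Set

section Aux

variable {V : Type*} [AddCommGroup V] [Module ℝ V]

lemma aux_rootsSigmaTheta_eq (σ : V →ₗ[ℝ] V) (hσ : ∀ X, σ (σ X) = X) (P : Set (V →ₗ[ℝ] ℝ)) :
    rootsSigmaTheta σ P = {α | α ∈ P ∧ -(α.comp σ) ∈ P} := by
  ext α
  simp only [rootsSigmaTheta, Set.mem_inter_iff, Set.mem_image, Set.mem_setOf_eq]
  constructor
  · rintro ⟨hα, β, hβ, rfl⟩
    refine ⟨hα, ?_⟩
    have h : -((-(β.comp σ)).comp σ) = β := by
      ext x; simp [hσ x]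
    rwa [h]
  · rintro ⟨h1, h2⟩
    exact ⟨h1, -(α.comp σ), h2, by ext x; simp [hσ x]⟩

lemma aux_rootsSigma_eq (σ : V →ₗ[ℝ] V) (hσ : ∀ X, σ (σ X) = X) (P : Set (V →ₗ[ℝ] ℝ)) :
    rootsSigma σ P = {α | α ∈ P ∧ α.comp σ ∈ P} := by
  ext α
  simp only [rootsSigma, Set.mem_inter_iff, Set.mem_image, Set.mem_setOf_eq]
  constructor
  · rintro ⟨hα, β, hβ, rfl⟩
    refine ⟨hα, ?_⟩
    have h : (β.comp σ).comp σ = β := by ext x; simp [hσ x]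
    rwa [h]
  · rintro ⟨h1, h2⟩
    exact ⟨h1, α.comp σ, h2, by ext x; simp [hσ x]⟩

lemma aux_neg_ah (σ : V →ₗ[ℝ] V) (α : V →ₗ[ℝ] ℝ) : -α ∈ ahStar σ ↔ α ∈ ahStar σ := by
  unfold ahStar
  simp only [Set.mem_setOf_eq, LinearMap.neg_comp, neg_inj]

lemma aux_ah_apply (σ : V →ₗ[ℝ] V) {α : V →ₗ[ℝ] ℝ} (hα : α ∈ ahStar σ)
    {H : V} (hH : H ∈ aqSet σ) : α H = 0 := by
  have h1 : α (σ H) = α H := DFunLike.congr_fun hα H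
  have h2 : σ H = -H := hH
  rw [h2, map_neg] at h1
  linarith

lemma aux_ah_comp (σ : V →ₗ[ℝ] V) {α : V →ₗ[ℝ] ℝ} (hα : α ∈ ahStar σ) (W : V) :
    α (σ W) = α W := DFunLike.congr_fun hα W

/-- Characterization of `Σ(P,σθ)` for a positive system. -/
lemma posSystem_sigmaTheta (σ : V →ₗ[ℝ] V) (hσ : ∀ X, σ (σ X) = X)
    (S : Set (V →ₗ[ℝ] ℝ)) (hSneg : ∀ α ∈ S, -α ∈ S) (hSσ : ∀ α ∈ S, α.comp σ ∈ S) (Y : V) :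
    rootsSigmaTheta σ {α | α ∈ S ∧ 0 < α Y} = {α | α ∈ S ∧ 0 < α Y ∧ α (σ Y) < 0} := by
  rw [aux_rootsSigmaTheta_eq σ hσ]
  ext α
  simp only [Set.mem_setOf_eq, LinearMap.neg_apply, LinearMap.comp_apply]
  constructor
  · rintro ⟨⟨h1, h2⟩, _, h4⟩
    exact ⟨h1, h2, by linarith⟩
  · rintro ⟨h1, h2, h3⟩
    exact ⟨⟨h1, h2⟩, hSneg _ (hSσ _ h1), by linarith⟩

/-- Characterization of `Σ(P,σ)` for a positive system. -/
lemma posSystem_sigma (σ : V →ₗ[ℝ] V) (hσ : ∀ X, σ (σ X) = X)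
    (S : Set (V →ₗ[ℝ] ℝ)) (hSσ : ∀ α ∈ S, α.comp σ ∈ S) (Y : V) :
    rootsSigma σ {α | α ∈ S ∧ 0 < α Y} = {α | α ∈ S ∧ 0 < α Y ∧ 0 < α (σ Y)} := by
  rw [aux_rootsSigma_eq σ hσ]
  ext α
  simp only [Set.mem_setOf_eq, LinearMap.comp_apply]
  constructor
  · rintro ⟨⟨h1, h2⟩, _, h4⟩
    exact ⟨h1, h2, h4⟩
  · rintro ⟨h1, h2, h3⟩
    exact ⟨⟨h1, h2⟩, hSσ _ h1, h3⟩

/-- The sign chamber determined by a regular element `H`. -/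
def signSet (σ : V →ₗ[ℝ] V) (S : Set (V →ₗ[ℝ] ℝ)) (H : V) : Set V :=
  {K | K ∈ aqSet σ ∧ ∀ α ∈ S \ ahStar σ, 0 < α H * α K}

end Aux

section Top

variable {V : Type*} [NormedAddCommGroup V] [NormedSpace ℝ V] [FiniteDimensional ℝ V]

lemma signSet_subset_aqReg (σ : V →ₗ[ℝ] V) (S : Set (V →ₗ[ℝ] ℝ)) (H : V) :
    signSet σ S H ⊆ aqReg σ S := by
  rintro K ⟨hq, hs⟩
  refine ⟨hq, fun α hα h0 => ?_⟩
  have := hs α hα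
  rw [h0, mul_zero] at this
  exact lt_irrefl 0 this

lemma self_mem_signSet (σ : V →ₗ[ℝ] V) (S : Set (V →ₗ[ℝ] ℝ)) {H : V}
    (hH : H ∈ aqReg σ S) : H ∈ signSet σ S H :=
  ⟨hH.1, fun α hα => mul_self_pos.2 (hH.2 α hα)⟩

lemma chamber_eq (σ : V →ₗ[ℝ] V) (S : Set (V →ₗ[ℝ] ℝ)) (hSfin : S.Finite)
    {H : V} (hH : H ∈ aqReg σ S) :
    connectedComponentIn (aqReg σ S) H = signSet σ S H := by
  have hDreg : signSet σ S H ⊆ aqReg σ S := signSet_subset_aqReg σ S H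
  have hHD : H ∈ signSet σ S H := self_mem_signSet σ S hH
  have hDeq : signSet σ S H = aqSet σ ∩ ⋂ α ∈ S \ ahStar σ, {K : V | 0 < α H * α K} := by
    ext K
    simp only [signSet, Set.mem_setOf_eq, Set.mem_inter_iff, Set.mem_iInter]
  have hconv : Convex ℝ (signSet σ S H) := by
    rw [hDeq]
    refine Convex.inter ?_ (convex_iInter₂ fun α _ => ?_)
    · intro x hx y hy a b _ _ _
      have hx' : σ x = -x := hx
      have hy' : σ y = -y := hy
      show σ (a • x + b • y) = -(a • x + b • y)
      rw [map_add, map_smul, map_smul, hx', hy', smul_neg, smul_neg, neg_add]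
    · exact convex_halfSpace_gt ⟨fun x y => by simp [map_add]; ring,
        fun c x => by simp [map_smul]; ring⟩ 0
  apply Set.Subset.antisymm
  · set U := ⋂ α ∈ S \ ahStar σ, {K : V | 0 < α H * α K} with hU
    set W := ⋃ α ∈ S \ ahStar σ, {K : V | α H * α K < 0} with hW
    have hUopen : IsOpen U :=
      (hSfin.diff (t := ahStar σ)).isOpen_biInter fun α _ =>
        isOpen_lt continuous_const (continuous_const.mul α.continuous_of_finiteDimensional)
    have hWopen : IsOpen W :=
      isOpen_biUnion fun α _ =>
        isOpen_lt (continuous_const.mul α.continuous_of_finiteDimensional) continuous_const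
    have hdisj : Disjoint U W := by
      rw [Set.disjoint_left]
      rintro K hKU hKW
      simp only [hU, hW, Set.mem_iInter, Set.mem_iUnion, Set.mem_setOf_eq] at hKU hKW
      obtain ⟨α, hα, hlt⟩ := hKW
      linarith [hKU α hα]
    have hsub : connectedComponentIn (aqReg σ S) H ⊆ U ∪ W := by
      intro K hK
      have hKreg := connectedComponentIn_subset (aqReg σ S) H hK
      by_cases h : ∀ α ∈ S \ ahStar σ, 0 < α H * α K
      · left
        simp only [hU, Set.mem_iInter, Set.mem_setOf_eq]
        exact h
      · right
        push_neg at h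
        obtain ⟨α, hα, hle⟩ := h
        have h1 : α H ≠ 0 := hH.2 α hα
        have h2 : α K ≠ 0 := hKreg.2 α hα
        simp only [hW, Set.mem_iUnion, Set.mem_setOf_eq]
        exact ⟨α, hα, lt_of_le_of_ne hle (mul_ne_zero h1 h2)⟩
    have hne : (connectedComponentIn (aqReg σ S) H ∩ U).Nonempty := by
      refine ⟨H, mem_connectedComponentIn hH, ?_⟩
      simp only [hU, Set.mem_iInter, Set.mem_setOf_eq]
      exact fun α hα => hHD.2 α hα
    have hcomp : IsPreconnected (connectedComponentIn (aqReg σ S) H) :=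
      isPreconnected_connectedComponentIn
    have hU' := hcomp.subset_left_of_subset_union hUopen hWopen hdisj hsub hne
    intro K hK
    have hKreg := connectedComponentIn_subset (aqReg σ S) H hK
    have := hU' hK
    simp only [hU, Set.mem_iInter, Set.mem_setOf_eq] at this
    exact ⟨hKreg.1, this⟩
  · exact hconv.isPreconnected.subset_connectedComponentIn hHD hDreg

/-- `aqPlus` in terms of the sign set. -/
lemma aqPlus_eq_signSet (σ : V →ₗ[ℝ] V) (S : Set (V →ₗ[ℝ] ℝ))
    (hSneg : ∀ α ∈ S, -α ∈ S) {H : V} (hH : H ∈ aqReg σ S) {P : Set (V →ₗ[ℝ] ℝ)}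
    (hP : rootsSigmaTheta σ P = {α | (α ∈ S \ ahStar σ) ∧ 0 < α H}) :
    aqPlus σ P = signSet σ S H := by
  ext K
  simp only [aqPlus, signSet, Set.mem_setOf_eq, hP]
  constructor
  · rintro ⟨hq, hpos⟩
    refine ⟨hq, fun α hα => ?_⟩
    have hne : α H ≠ 0 := hH.2 α hα
    rcases hne.lt_or_gt with hlt | hgt
    · have hneg : -α ∈ S \ ahStar σ := ⟨hSneg α hα.1, fun h => hα.2 ((aux_neg_ah σ α).1 h)⟩
      have h2 := hpos (-α) ⟨hneg, by simpa using hlt⟩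
      simp only [LinearMap.neg_apply] at h2
      nlinarith
    · have := hpos α ⟨hα, hgt⟩
      nlinarith
  · rintro ⟨hq, hsgn⟩
    refine ⟨hq, ?_⟩
    rintro α ⟨hα, hpos⟩
    have := hsgn α hα
    nlinarith

end Top

section Alg

variable {V : Type*} [AddCommGroup V] [Module ℝ V]

set_option linter.unusedSectionVars false

/-- The canonical regular element attached to a q-extreme positive system. -/
lemma qExtreme_H (σ : V →ₗ[ℝ] V) (hσ : ∀ X, σ (σ X) = X)
    (S : Set (V →ₗ[ℝ] ℝ)) (hSneg : ∀ α ∈ S, -α ∈ S) (hSσ : ∀ α ∈ S, α.comp σ ∈ S)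
    {Y : V} (hY : ∀ α ∈ S, α Y ≠ 0) {P : Set (V →ₗ[ℝ] ℝ)}
    (hP : P = {α | α ∈ S ∧ 0 < α Y})
    (hqe : rootsSigmaTheta σ P = P \ ahStar σ) :
    (Y - σ Y) ∈ aqReg σ S ∧
      rootsSigmaTheta σ P = {α | (α ∈ S \ ahStar σ) ∧ 0 < α (Y - σ Y)} := by
  have hq : (Y - σ Y) ∈ aqSet σ := by
    show σ (Y - σ Y) = -(Y - σ Y)
    rw [map_sub, hσ]; abel
  have hst : rootsSigmaTheta σ P = {α | α ∈ S ∧ 0 < α Y ∧ α (σ Y) < 0} := by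
    rw [hP]; exact posSystem_sigmaTheta σ hσ S hSneg hSσ Y
  have claim1 : ∀ α, α ∈ P → α ∉ ahStar σ → 0 < α (Y - σ Y) := by
    intro α hαP hah
    have hmem : α ∈ rootsSigmaTheta σ P := by rw [hqe]; exact ⟨hαP, hah⟩
    rw [hst] at hmem
    obtain ⟨_, h1, h2⟩ := hmem
    rw [map_sub]; linarith
  have claim2 : ∀ α ∈ S \ ahStar σ, α ∉ P → α (Y - σ Y) < 0 := by
    intro α hα hnP
    have hαY : α Y ≠ 0 := hY α hα.1
    rw [hP] at hnP
    simp only [Set.mem_setOf_eq, not_and, not_lt] at hnP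
    have hle : α Y ≤ 0 := hnP hα.1
    have hneg : -α ∈ P := by
      rw [hP]
      refine ⟨hSneg α hα.1, ?_⟩
      simp only [LinearMap.neg_apply]
      cases' lt_or_eq_of_le hle with h h
      · linarith
      · exact absurd h hαY
    have hnah : -α ∉ ahStar σ := fun h => hα.2 ((aux_neg_ah σ α).1 h)
    have := claim1 (-α) hneg hnah
    simp only [LinearMap.neg_apply] at this
    linarith
  refine ⟨⟨hq, fun α hα => ?_⟩, ?_⟩
  · by_cases h : α ∈ P
    · exact (claim1 α h hα.2).ne'
    · exact (claim2 α hα h).ne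
  · rw [hqe]
    ext α
    simp only [Set.mem_diff, Set.mem_setOf_eq]
    constructor
    · rintro ⟨hαP, hah⟩
      have hαS : α ∈ S := by rw [hP] at hαP; exact hαP.1
      exact ⟨⟨hαS, hah⟩, claim1 α hαP hah⟩
    · rintro ⟨⟨hαS, hah⟩, hpos⟩
      by_cases h : α ∈ P
      · exact ⟨h, hah⟩
      · exact absurd hpos (not_lt.2 (claim2 α ⟨hαS, hah⟩ h).le)

lemma ah_mem_of_dominates (σ : V →ₗ[ℝ] V) (hσ : ∀ X, σ (σ X) = X)
    {P Q : Set (V →ₗ[ℝ] ℝ)} (hdom : rootsSigma σ P ⊆ rootsSigma σ Q) :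
    ∀ α ∈ P, α ∈ ahStar σ → α ∈ Q := by
  intro α hP hah
  have h1 : α ∈ rootsSigma σ P := by
    rw [aux_rootsSigma_eq σ hσ]
    exact ⟨hP, by rw [hah]; exact hP⟩
  have h2 := hdom h1
  rw [aux_rootsSigma_eq σ hσ] at h2
  exact h2.1

lemma ah_part_eq (σ : V →ₗ[ℝ] V) (hσ : ∀ X, σ (σ X) = X)
    (S : Set (V →ₗ[ℝ] ℝ)) (hSneg : ∀ α ∈ S, -α ∈ S)
    {P Q : Set (V →ₗ[ℝ] ℝ)} (hPps : IsPosSystem S P) (hQps : IsPosSystem S Q)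
    (hdom : rootsSigma σ P ⊆ rootsSigma σ Q) :
    P ∩ ahStar σ = Q ∩ ahStar σ := by
  obtain ⟨YP, hYP, hPdef⟩ := hPps
  obtain ⟨YQ, hYQ, hQdef⟩ := hQps
  apply Set.Subset.antisymm
  · rintro α ⟨hαP, hah⟩
    exact ⟨ah_mem_of_dominates σ hσ hdom α hαP hah, hah⟩
  · rintro α ⟨hαQ, hah⟩
    refine ⟨?_, hah⟩
    by_contra hnP
    have hαS : α ∈ S := by rw [hQdef] at hαQ; exact hαQ.1
    have hYPne : α YP ≠ 0 := hYP α hαS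
    rw [hPdef] at hnP
    simp only [Set.mem_setOf_eq, not_and, not_lt] at hnP
    have hle : α YP ≤ 0 := hnP hαS
    have hnegP : -α ∈ P := by
      rw [hPdef]
      refine ⟨hSneg α hαS, ?_⟩
      simp only [LinearMap.neg_apply]
      cases' lt_or_eq_of_le hle with h h
      · linarith
      · exact absurd h hYPne
    have hnegah : -α ∈ ahStar σ := (aux_neg_ah σ α).2 hah
    have hnegQ : -α ∈ Q := ah_mem_of_dominates σ hσ hdom (-α) hnegP hnegah
    rw [hQdef] at hnegQ hαQ
    simp only [Set.mem_setOf_eq, LinearMap.neg_apply] at hnegQ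
    linarith [hαQ.2, hnegQ.2]

end Alg

/-- Uniform epsilon for a finite family. -/
lemma exists_eps {ι : Type*} {S : Set ι} (hS : S.Finite) (f g : ι → ℝ) :
    ∃ ε : ℝ, 0 < ε ∧ ∀ a ∈ S, f a ≠ 0 → ε * g a < |f a| := by
  refine Set.Finite.induction_on S hS
    ⟨1, one_pos, fun a ha => absurd ha (Set.notMem_empty a)⟩ ?_
  intro a s ha hs ih
  · obtain ⟨ε₀, hε₀, h₀⟩ := ih
    by_cases hfa : f a = 0
    · refine ⟨ε₀, hε₀, fun x hx hfx => ?_⟩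
      rcases Set.mem_insert_iff.1 hx with rfl | hx
      · exact absurd hfa hfx
      · exact h₀ x hx hfx
    · have habs : 0 < |f a| := abs_pos.2 hfa
      obtain ⟨εa, hεa, hlt⟩ : ∃ εa : ℝ, 0 < εa ∧ εa * g a < |f a| := by
        by_cases hga : 0 < g a
        · refine ⟨|f a| / (2 * g a), by positivity, ?_⟩
          rw [div_mul_eq_mul_div, div_lt_iff₀ (by positivity : (0:ℝ) < 2 * g a)]
          nlinarith
        · push_neg at hga
          exact ⟨1, one_pos, by nlinarith⟩
      refine ⟨min ε₀ εa, lt_min hε₀ hεa, ?_⟩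
      intro x hx hfx
      have hmpos : 0 < min ε₀ εa := lt_min hε₀ hεa
      rcases Set.mem_insert_iff.1 hx with rfl | hx
      · rcases le_or_gt (g x) 0 with hg | hg
        · nlinarith
        · calc min ε₀ εa * g x ≤ εa * g x := by nlinarith [min_le_right ε₀ εa]
            _ < |f x| := hlt
      · have h2 := h₀ x hx hfx
        have habsx : 0 < |f x| := abs_pos.2 hfx
        rcases le_or_gt (g x) 0 with hg | hg
        · nlinarith
        · calc min ε₀ εa * g x ≤ ε₀ * g x := by nlinarith [min_le_left ε₀ εa]
            _ < |f x| := h2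

/-- The map `Σ(P) ↦ 𝔞_q^+(P)` is a bijection from the set of q-extreme positive systems
`Σ(P)` with `P ⪰ Q` onto the set of connected components of `𝔞_q^reg` contained
in `𝔞_q^+(Q)`. -/
theorem bijOn_aqPlus_chambers
    {V : Type*} [NormedAddCommGroup V] [NormedSpace ℝ V] [FiniteDimensional ℝ V]
    (σ : V →ₗ[ℝ] V) (hσ : ∀ X, σ (σ X) = X)
    (S : Set (V →ₗ[ℝ] ℝ)) (hSfin : S.Finite) (hS0 : (0 : V →ₗ[ℝ] ℝ) ∉ S)
    (hSneg : ∀ α ∈ S, -α ∈ S) (hSσ : ∀ α ∈ S, α.comp σ ∈ S)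
    (Q : Set (V →ₗ[ℝ] ℝ)) (hQ : IsPosSystem S Q) :
    Set.BijOn (fun P => aqPlus σ P)
      {P | IsPosSystem S P ∧ rootsSigmaTheta σ P = P \ ahStar σ ∧ Dominates σ P Q}
      {C | (∃ x ∈ aqReg σ S, C = connectedComponentIn (aqReg σ S) x) ∧
        C ⊆ aqPlus σ Q} := by
  obtain ⟨YQ, hYQ, hQdef⟩ := hQ
  refine ⟨?_, ?_, ?_⟩
  · -- MapsTo
    rintro P ⟨⟨Y, hY, hPdef⟩, hqe, hdom⟩
    obtain ⟨hHreg, hPst⟩ := qExtreme_H σ hσ S hSneg hSσ hY hPdef hqe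
    refine ⟨⟨Y - σ Y, hHreg, ?_⟩, ?_⟩
    · rw [chamber_eq σ S hSfin hHreg]
      exact aqPlus_eq_signSet σ S hSneg hHreg hPst
    · rintro K ⟨hq, hpos⟩
      exact ⟨hq, fun α hα => hpos α (hdom.1 hα)⟩
  · -- InjOn
    rintro P₁ ⟨⟨Y₁, hY₁, hP₁⟩, hqe₁, hdom₁⟩ P₂ ⟨⟨Y₂, hY₂, hP₂⟩, hqe₂, hdom₂⟩ heq
    obtain ⟨hH₁, hst₁⟩ := qExtreme_H σ hσ S hSneg hSσ hY₁ hP₁ hqe₁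
    obtain ⟨hH₂, hst₂⟩ := qExtreme_H σ hσ S hSneg hSσ hY₂ hP₂ hqe₂
    have e1 : signSet σ S (Y₁ - σ Y₁) = signSet σ S (Y₂ - σ Y₂) := by
      rw [← aqPlus_eq_signSet σ S hSneg hH₁ hst₁, ← aqPlus_eq_signSet σ S hSneg hH₂ hst₂]
      exact heq
    have hmem : (Y₁ - σ Y₁) ∈ signSet σ S (Y₂ - σ Y₂) := by
      rw [← e1]; exact self_mem_signSet σ S hH₁
    have hsame : ∀ α ∈ S \ ahStar σ, (0 < α (Y₁ - σ Y₁) ↔ 0 < α (Y₂ - σ Y₂)) := by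
      intro α hα
      have hprod := hmem.2 α hα
      have hne1 := hH₁.2 α hα
      have hne2 := hH₂.2 α hα
      constructor <;> intro h <;> nlinarith
    have hd : P₁ \ ahStar σ = P₂ \ ahStar σ := by
      rw [← hqe₁, ← hqe₂, hst₁, hst₂]
      ext α
      simp only [Set.mem_setOf_eq]
      constructor
      · rintro ⟨h1, h2⟩; exact ⟨h1, (hsame α h1).1 h2⟩
      · rintro ⟨h1, h2⟩; exact ⟨h1, (hsame α h1).2 h2⟩
    have hinter : P₁ ∩ ahStar σ = P₂ ∩ ahStar σ := by
      rw [ah_part_eq σ hσ S hSneg ⟨Y₁, hY₁, hP₁⟩ ⟨YQ, hYQ, hQdef⟩ hdom₁.2,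
        ah_part_eq σ hσ S hSneg ⟨Y₂, hY₂, hP₂⟩ ⟨YQ, hYQ, hQdef⟩ hdom₂.2]
    calc P₁ = P₁ \ ahStar σ ∪ P₁ ∩ ahStar σ := (Set.diff_union_inter P₁ (ahStar σ)).symm
      _ = P₂ \ ahStar σ ∪ P₂ ∩ ahStar σ := by rw [hd, hinter]
      _ = P₂ := Set.diff_union_inter P₂ (ahStar σ)
  · -- SurjOn
    rintro C ⟨⟨H, hHreg, hCx⟩, hCQ⟩
    have hσH : σ H = -H := hHreg.1
    have hHQ : H ∈ aqPlus σ Q := hCQ (hCx ▸ mem_connectedComponentIn hHreg)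
    obtain ⟨ε, hε, hεlt⟩ := exists_eps hSfin (fun α => α H)
      (fun α => max (|α YQ|) (|α (σ YQ)|))
    set X := H + ε • YQ with hXdef
    have hsX : σ X = -H + ε • σ YQ := by
      rw [hXdef, map_add, map_smul, hσH]
    have eX : ∀ α : V →ₗ[ℝ] ℝ, α X = α H + ε * α YQ := by
      intro α; rw [hXdef, map_add, map_smul, smul_eq_mul]
    have eσX : ∀ α : V →ₗ[ℝ] ℝ, α (σ X) = -α H + ε * α (σ YQ) := by
      intro α; rw [hsX, map_add, map_neg, map_smul, smul_eq_mul]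
    have hzero : ∀ α ∈ S, α H = 0 → α ∈ ahStar σ := by
      intro α hαS h0
      by_contra hn
      exact hHreg.2 α ⟨hαS, hn⟩ h0
    have hax : ∀ α ∈ S, α H ≠ 0 →
        (0 < α H → 0 < α X ∧ α (σ X) < 0) ∧ (α H < 0 → α X < 0 ∧ 0 < α (σ X)) := by
      intro α hαS hne
      have h1 := hεlt α hαS hne
      have h4 : |ε * α YQ| < |α H| := by
        rw [abs_mul, abs_of_pos hε]
        calc ε * |α YQ| ≤ ε * max (|α YQ|) (|α (σ YQ)|) := by
              nlinarith [le_max_left (|α YQ|) (|α (σ YQ)|)]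
          _ < |α H| := h1
      have h5 : |ε * α (σ YQ)| < |α H| := by
        rw [abs_mul, abs_of_pos hε]
        calc ε * |α (σ YQ)| ≤ ε * max (|α YQ|) (|α (σ YQ)|) := by
              nlinarith [le_max_right (|α YQ|) (|α (σ YQ)|)]
          _ < |α H| := h1
      constructor
      · intro hp
        rw [abs_of_pos hp] at h4 h5
        constructor
        · rw [eX α]; linarith [neg_abs_le (ε * α YQ)]
        · rw [eσX α]; linarith [le_abs_self (ε * α (σ YQ))]
      · intro hn
        rw [abs_of_neg hn] at h4 h5
        constructor
        · rw [eX α]; linarith [le_abs_self (ε * α YQ)]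
        · rw [eσX α]; linarith [neg_abs_le (ε * α (σ YQ))]
    have hahX : ∀ α ∈ S, α ∈ ahStar σ → α X = ε * α YQ ∧ α (σ X) = ε * α YQ := by
      intro α hαS hah
      have h0 : α H = 0 := aux_ah_apply σ hah hHreg.1
      constructor
      · rw [eX α, h0, zero_add]
      · rw [eσX α, h0, aux_ah_comp σ hah YQ, neg_zero, zero_add]
    have hXne : ∀ α ∈ S, α X ≠ 0 := by
      intro α hαS
      by_cases h : α H = 0
      · have := (hahX α hαS (hzero α hαS h)).1
        rw [this]
        exact mul_ne_zero hε.ne' (hYQ α hαS)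
      · rcases Ne.lt_or_gt h with hlt | hgt
        · exact (((hax α hαS h).2 hlt).1).ne
        · exact (((hax α hαS h).1 hgt).1).ne'
    set P : Set (V →ₗ[ℝ] ℝ) := {α | α ∈ S ∧ 0 < α X} with hPdef
    have hPps : IsPosSystem S P := ⟨X, hXne, rfl⟩
    have hst : rootsSigmaTheta σ P = {α | α ∈ S ∧ 0 < α X ∧ α (σ X) < 0} := by
      rw [hPdef]; exact posSystem_sigmaTheta σ hσ S hSneg hSσ X
    have hnotah : ∀ α ∈ S, 0 < α X → α (σ X) < 0 → α ∉ ahStar σ := by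
      intro α hαS hx hsx hah
      have := hahX α hαS hah
      rw [this.1] at hx; rw [this.2] at hsx
      linarith
    have hposH : ∀ α ∈ S, α ∉ ahStar σ → 0 < α X → 0 < α H := by
      intro α hαS hah hx
      have hne : α H ≠ 0 := fun h => hah (hzero α hαS h)
      rcases hne.lt_or_gt with hlt | hgt
      · exact absurd hx (not_lt.2 ((hax α hαS hne).2 hlt).1.le)
      · exact hgt
    have hstH : rootsSigmaTheta σ P = {α | (α ∈ S \ ahStar σ) ∧ 0 < α H} := by
      rw [hst]
      ext α
      simp only [Set.mem_setOf_eq, Set.mem_diff]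
      constructor
      · rintro ⟨hαS, hx, hsx⟩
        have hah := hnotah α hαS hx hsx
        exact ⟨⟨hαS, hah⟩, hposH α hαS hah hx⟩
      · rintro ⟨⟨hαS, hah⟩, hp⟩
        have h := (hax α hαS hp.ne').1 hp
        exact ⟨hαS, h.1, h.2⟩
    have hqe : rootsSigmaTheta σ P = P \ ahStar σ := by
      rw [hstH]
      ext α
      simp only [Set.mem_setOf_eq, Set.mem_diff, hPdef]
      constructor
      · rintro ⟨⟨hαS, hah⟩, hp⟩
        exact ⟨⟨hαS, (((hax α hαS hp.ne').1 hp).1)⟩, hah⟩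
      · rintro ⟨⟨hαS, hx⟩, hah⟩
        exact ⟨⟨hαS, hah⟩, hposH α hαS hah hx⟩
    have hQst : rootsSigmaTheta σ Q = {α | α ∈ S ∧ 0 < α YQ ∧ α (σ YQ) < 0} := by
      rw [hQdef]; exact posSystem_sigmaTheta σ hσ S hSneg hSσ YQ
    have hdom : Dominates σ P Q := by
      constructor
      · intro α hα
        have hαH : 0 < α H := hHQ.2 α hα
        rw [hQst] at hα
        rw [hstH]
        refine ⟨⟨hα.1, fun hah => ?_⟩, hαH⟩
        rw [aux_ah_apply σ hah hHreg.1] at hαH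
        exact lt_irrefl 0 hαH
      · intro α hα
        have hα' : α ∈ S ∧ 0 < α X ∧ 0 < α (σ X) := by
          rw [hPdef, posSystem_sigma σ hσ S hSσ X] at hα
          exact hα
        obtain ⟨hαS, hx, hsx⟩ := hα'
        have hah : α ∈ ahStar σ := by
          by_contra hn
          have hne : α H ≠ 0 := fun h => hn (hzero α hαS h)
          rcases hne.lt_or_gt with hlt | hgt
          · exact absurd hx (not_lt.2 ((hax α hαS hne).2 hlt).1.le)
          · exact absurd hsx (not_lt.2 ((hax α hαS hne).1 hgt).2.le)
        have hYQpos : 0 < α YQ := by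
          have := (hahX α hαS hah).1
          rw [this] at hx
          nlinarith
        rw [hQdef, posSystem_sigma σ hσ S hSσ YQ]
        exact ⟨hαS, hYQpos, by rw [aux_ah_comp σ hah YQ]; exact hYQpos⟩
    refine ⟨P, ⟨hPps, hqe, hdom⟩, ?_⟩
    show aqPlus σ P = C
    rw [aqPlus_eq_signSet σ S hSneg hHreg hstH, hCx, chamber_eq σ S hSfin hHreg]
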